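/- arXiv:1608.04210 — 3 statements merged into one kernel-verified Lean document; each statement's English description precedes it below -/
import Mathlib

section
/- Let λ be an algebraic number with minimal polynomial a∏(x - λ_j) over ℤ, and let m be the number of Galois conjugates λ_j of modulus exactly 1. Then there exists a constant c > 0 depending only on λ such that for every polynomial P of degree at most d with coefficients in {-1, 0, 1}, either P(λ) = 0 or |P(λ)| ≥ c·d^{-m}·M_λ^{-d}, where M_λ = a·∏_{|λ_j|>1} |λ_j| is the Mahler measure of λ. -/
open Polynomial IntermediateField

noncomputable section

namespace Stmt9Aux

lemma mprod_nonneg (s : Multiset ℝ) (h : ∀ x ∈ s, 0 ≤ x) : 0 ≤ s.prod := by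
  induction s using Multiset.induction_on with
  | empty => simp
  | cons a s ih =>
    simp only [Multiset.prod_cons]
    exact mul_nonneg (h a (Multiset.mem_cons_self a s))
      (ih fun x hx => h x (Multiset.mem_cons_of_mem hx))

lemma mprod_pos (s : Multiset ℝ) (h : ∀ x ∈ s, 0 < x) : 0 < s.prod := by
  induction s using Multiset.induction_on with
  | empty => simp
  | cons a s ih =>
    simp only [Multiset.prod_cons]
    exact mul_pos (h a (Multiset.mem_cons_self a s))
      (ih fun x hx => h x (Multiset.mem_cons_of_mem hx))

lemma mprod_le_mprod (s : Multiset ℂ) (f g : ℂ → ℝ) (h0 : ∀ z ∈ s, 0 ≤ f z)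
    (h : ∀ z ∈ s, f z ≤ g z) : (s.map f).prod ≤ (s.map g).prod := by
  induction s using Multiset.induction_on with
  | empty => simp
  | cons a s ih =>
    simp only [Multiset.map_cons, Multiset.prod_cons]
    have hf : 0 ≤ (s.map f).prod := by
      apply mprod_nonneg
      intro x hx
      obtain ⟨z, hz, rfl⟩ := Multiset.mem_map.mp hx
      exact h0 z (Multiset.mem_cons_of_mem hz)
    exact mul_le_mul (h a (Multiset.mem_cons_self a s))
      (ih (fun z hz => h0 z (Multiset.mem_cons_of_mem hz))
        (fun z hz => h z (Multiset.mem_cons_of_mem hz))) hf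
      (le_trans (h0 a (Multiset.mem_cons_self a s)) (h a (Multiset.mem_cons_self a s)))

lemma abs_mprod (s : Multiset ℂ) : ‖s.prod‖ = (s.map (‖·‖)).prod := by
  induction s using Multiset.induction_on with
  | empty => simp
  | cons a s ih => simp [norm_mul, ih]

lemma mprod_one (s : Multiset ℝ) (h : ∀ x ∈ s, 1 ≤ x) : 1 ≤ s.prod := by
  induction s using Multiset.induction_on with
  | empty => simp
  | cons a s ih =>
    simp only [Multiset.prod_cons]
    exact one_le_mul_of_one_le_of_one_le (h a (Multiset.mem_cons_self a s))
      (ih fun x hx => h x (Multiset.mem_cons_of_mem hx))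

lemma prod_map_ite (s : Multiset ℂ) (c : ℝ) (pred : ℂ → Prop) [DecidablePred pred] :
    (s.map fun z => if pred z then c else 1).prod = c ^ Multiset.card (s.filter pred) := by
  induction s using Multiset.induction_on with
  | empty => simp
  | cons a s ih =>
    by_cases h : pred a <;>
      simp [h, ih, Multiset.filter_cons, pow_succ, mul_comm]

def bconst (r : ℝ) : ℝ := if r < 1 then (1 - r)⁻¹ else if r = 1 then 1 else r / (r - 1)

lemma bconst_pos {r : ℝ} (hr : 0 ≤ r) : 0 < bconst r := by
  unfold bconst
  split_ifs with h1 h2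
  · have : 0 < 1 - r := by linarith
    positivity
  · norm_num
  · have h : 1 < r := lt_of_le_of_ne (not_lt.mp h1) (Ne.symm h2)
    have : 0 < r - 1 := by linarith
    positivity

lemma geom_bound (r : ℝ) (hr : 0 ≤ r) (d : ℕ) (hd : 1 ≤ d) :
    ∑ i ∈ Finset.range (d + 1), r ^ i ≤
      bconst r * (if r = 1 then 2 * (d : ℝ) else 1) * max 1 r ^ d := by
  rcases lt_trichotomy r 1 with h | h | h
  · have hmax : max 1 r = 1 := max_eq_left h.le
    rw [bconst, if_pos h, if_neg h.ne, hmax, one_pow, mul_one, mul_one]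
    have h1r : 0 < 1 - r := by linarith
    rw [geom_sum_eq h.ne (d + 1), ← neg_div_neg_eq, neg_sub, neg_sub, inv_eq_one_div]
    gcongr
    have : 0 ≤ r ^ (d + 1) := pow_nonneg hr _
    linarith
  · subst h
    rw [bconst, if_pos rfl, if_neg (lt_irrefl 1), if_pos rfl]
    simp only [one_pow, max_self, one_mul, mul_one]
    rw [Finset.sum_const, Finset.card_range, nsmul_eq_mul, mul_one]
    push_cast
    have : (1 : ℝ) ≤ d := by exact_mod_cast hd
    linarith
  · have hmax : max 1 r = r := max_eq_right h.le
    rw [bconst, if_neg (not_lt.mpr h.le), if_neg (ne_of_gt h), if_neg (ne_of_gt h), hmax,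
      mul_one, geom_sum_eq (ne_of_gt h) (d + 1), div_mul_eq_mul_div, ← pow_succ']
    have hr1 : 0 < r - 1 := by linarith
    gcongr
    simp

lemma eval_abs_le (z : ℂ) (d : ℕ) (P : Polynomial ℤ) (hd : P.natDegree ≤ d)
    (hc : ∀ i, P.coeff i ∈ ({-1, 0, 1} : Set ℤ)) :
    ‖((P.map (Int.castRingHom ℂ)).eval z)‖ ≤
      ∑ i ∈ Finset.range (d + 1), ‖z‖ ^ i := by
  have hdeg : (P.map (Int.castRingHom ℂ)).natDegree < d + 1 :=
    lt_of_le_of_lt (natDegree_map_le) (Nat.lt_succ_of_le hd)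
  rw [Polynomial.eval_eq_sum_range' hdeg]
  refine le_trans (norm_sum_le _ _) (Finset.sum_le_sum fun i _ => ?_)
  rw [norm_mul, norm_pow]
  have : ‖((P.map (Int.castRingHom ℂ)).coeff i)‖ ≤ 1 := by
    rw [Polynomial.coeff_map]
    rcases hc i with h | h | h <;> · rw [h]; simp
  calc ‖((P.map (Int.castRingHom ℂ)).coeff i)‖ * ‖z‖ ^ i
      ≤ 1 * ‖z‖ ^ i := by
        exact mul_le_mul_of_nonneg_right this (by positivity)
    _ = ‖z‖ ^ i := one_mul _

lemma prod_map_const_mul {α : Type*} (s : Multiset α) (c : ℂ) (f : α → ℂ) :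
    (s.map fun x => c * f x).prod = c ^ Multiset.card s * (s.map f).prod := by
  induction s using Multiset.induction_on with
  | empty => simp
  | cons a s ih => simp [ih, pow_succ]; ring

lemma key (l : ℝ) (p : Polynomial ℤ) (hirr : Irreducible p)
    (hroot : Polynomial.aeval l p = 0) (hlead : 0 < p.leadingCoeff)
    (P : Polynomial ℤ) (hP : Polynomial.aeval l P ≠ 0)
    (hb : P.leadingCoeff = 1 ∨ P.leadingCoeff = -1) :
    1 ≤ (p.leadingCoeff : ℝ) ^ P.natDegree *
      (((p.map (Int.castRingHom ℂ)).roots).map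
        (fun z => ‖((P.map (Int.castRingHom ℂ)).eval z)‖)).prod := by
  have hp0 : p ≠ 0 := hirr.ne_zero
  have hdegp : 0 < p.natDegree := by
    by_contra h
    push_neg at h
    have h0 : p.natDegree = 0 := Nat.le_zero.mp h
    have : p = C (p.coeff 0) := Polynomial.eq_C_of_natDegree_eq_zero h0
    rw [this] at hroot
    simp only [Polynomial.aeval_C] at hroot
    have : p.coeff 0 = 0 := by
      rw [algebraMap_int_eq, eq_intCast] at hroot
      exact_mod_cast hroot
    exact hp0 (by rw [‹p = C (p.coeff 0)›, this, map_zero])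
  -- primitivity
  have hprim : p.IsPrimitive := by
    rw [Polynomial.isPrimitive_iff_isUnit_of_C_dvd]
    intro r hdvd
    obtain ⟨q, hq⟩ := hdvd
    rcases hirr.isUnit_or_isUnit hq with h | h
    · exact Polynomial.isUnit_C.mp h
    · exfalso
      obtain ⟨s, hsu, hs⟩ := Polynomial.isUnit_iff.mp h
      rw [hq, ← hs, ← Polynomial.C_mul, Polynomial.natDegree_C] at hdegp
      exact lt_irrefl 0 hdegp
  set pQ : Polynomial ℚ := p.map (Int.castRingHom ℚ) with hpQ
  have hirrQ : Irreducible pQ :=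
    (Polynomial.IsPrimitive.Int.irreducible_iff_irreducible_map_cast hprim).mp hirr
  have hpQ0 : pQ ≠ 0 := hirrQ.ne_zero
  have hrootQ : Polynomial.aeval l pQ = 0 := by
    rw [hpQ, ← algebraMap_int_eq, aeval_map_algebraMap]; exact hroot
  have hlint : IsIntegral ℚ l := (IsAlgebraic.isIntegral ⟨pQ, hpQ0, hrootQ⟩)
  haveI : FiniteDimensional ℚ ℚ⟮l⟯ := IntermediateField.adjoin.finiteDimensional hlint
  set gen : ℚ⟮l⟯ := IntermediateField.AdjoinSimple.gen ℚ l with hgen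
  set u : ℚ⟮l⟯ := Polynomial.aeval gen P with hu
  have hmapgen : algebraMap ℚ⟮l⟯ ℝ gen = l := IntermediateField.AdjoinSimple.algebraMap_gen ℚ l
  have huval : algebraMap ℚ⟮l⟯ ℝ u = Polynomial.aeval l P := by
    rw [hu, ← Polynomial.aeval_algebraMap_apply, hmapgen]
  have hu0 : u ≠ 0 := by
    intro h
    rw [h, map_zero] at huval
    exact hP huval.symm
  -- minpoly and finrank
  have hminl : minpoly ℚ l = pQ * C pQ.leadingCoeff⁻¹ :=
    (minpoly.eq_of_irreducible hirrQ hrootQ).symm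
  have hmm : minpoly ℚ gen = minpoly ℚ l :=
    (minpoly.algebraMap_eq (algebraMap ℚ⟮l⟯ ℝ).injective gen).symm.trans
      (congrArg (minpoly ℚ) hmapgen)
  have hmingen : minpoly ℚ gen = pQ * C pQ.leadingCoeff⁻¹ := hmm.trans hminl
  have hdegmin : (minpoly ℚ gen).natDegree = pQ.natDegree := by
    rw [hmingen, natDegree_mul hpQ0 (by
      simp [leadingCoeff_ne_zero.mpr hpQ0]), natDegree_C, add_zero]
  have hfinrank : Module.finrank ℚ ℚ⟮l⟯ = pQ.natDegree := by
    rw [IntermediateField.adjoin.finrank hlint, ← hmm]; exact hdegmin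
  set R : Multiset ℂ := (pQ.map (algebraMap ℚ ℂ)).roots with hR
  have hmapmap : p.map (Int.castRingHom ℂ) = pQ.map (algebraMap ℚ ℂ) := by
    rw [hpQ, Polynomial.map_map]
    exact congrArg (fun f : ℤ →+* ℂ => Polynomial.map f p) (Subsingleton.elim _ _)
  have hsep : (pQ.map (algebraMap ℚ ℂ)).Separable := hirrQ.separable.map
  have hnodupR : R.Nodup := Polynomial.nodup_roots hsep
  have hcardR : Multiset.card R = pQ.natDegree :=
    by rw [hR, ← (IsAlgClosed.splits (pQ.map (algebraMap ℚ ℂ))).natDegree_eq_card_roots, Polynomial.natDegree_map]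
  -- embeddings
  have hgenroot : Polynomial.aeval gen pQ = 0 := by
    have h1 : algebraMap ℚ⟮l⟯ ℝ (Polynomial.aeval gen pQ) = 0 := by
      rw [← Polynomial.aeval_algebraMap_apply, hmapgen]; exact hrootQ
    exact (algebraMap ℚ⟮l⟯ ℝ).injective (by rw [h1, map_zero])
  have hemb : Multiset.map (fun σ : ℚ⟮l⟯ →ₐ[ℚ] ℂ => σ gen) Finset.univ.val = R := by
    have hinj : Function.Injective (fun σ : ℚ⟮l⟯ →ₐ[ℚ] ℂ => σ gen) := by
      intro σ τ h
      apply (IntermediateField.adjoin.powerBasis hlint).algHom_ext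
      rwa [IntermediateField.adjoin.powerBasis_gen]
    have hnodup : (Multiset.map (fun σ : ℚ⟮l⟯ →ₐ[ℚ] ℂ => σ gen) Finset.univ.val).Nodup :=
      Finset.univ.nodup.map hinj
    have hsub : ∀ x ∈ Multiset.map (fun σ : ℚ⟮l⟯ →ₐ[ℚ] ℂ => σ gen) Finset.univ.val, x ∈ R := by
      intro x hx
      obtain ⟨σ, _, rfl⟩ := Multiset.mem_map.mp hx
      rw [hR, Polynomial.mem_roots (Polynomial.map_ne_zero hpQ0)]
      show Polynomial.IsRoot _ (σ gen)
      rw [Polynomial.IsRoot, Polynomial.eval_map, ← Polynomial.aeval_def,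
        Polynomial.aeval_algHom_apply σ gen pQ, hgenroot, map_zero]
    refine Multiset.eq_of_le_of_card_le ((Multiset.le_iff_subset hnodup).mpr hsub) ?_
    rw [Multiset.card_map, hcardR]
    change pQ.natDegree ≤ Multiset.card Finset.univ.val
    rw [← Finset.card_def, Finset.card_univ, AlgHom.card, hfinrank]
  -- norm identity
  have hnorm : algebraMap ℚ ℂ (Algebra.norm ℚ u) =
      (R.map fun z => (P.map (Int.castRingHom ℂ)).eval z).prod := by
    rw [Algebra.norm_eq_prod_embeddings]
    rw [Finset.prod_eq_multiset_prod, ← hemb, Multiset.map_map]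
    congr 1
    apply Multiset.map_congr rfl
    intro σ _
    show σ u = (P.map (Int.castRingHom ℂ)).eval (σ gen)
    rw [hu, Polynomial.eval_map, ← algebraMap_int_eq, ← Polynomial.aeval_def]
    exact (Polynomial.aeval_algHom_apply (σ.restrictScalars ℤ) gen P).symm

  -- roots of P
  have hlcP : P.leadingCoeff ≠ 0 := by rcases hb with h | h <;> simp [h]
  have hP0 : P ≠ 0 := fun h => hlcP (by rw [h, leadingCoeff_zero])
  have hPmap0 : P.map (Int.castRingHom ℂ) ≠ 0 :=
    (Polynomial.map_ne_zero_iff Int.cast_injective).mpr hP0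
  set S : Multiset ℂ := (P.map (Int.castRingHom ℂ)).roots with hS
  have hdegPmap : (P.map (Int.castRingHom ℂ)).natDegree = P.natDegree :=
    Polynomial.natDegree_map_eq_of_injective Int.cast_injective P
  have hcardS : Multiset.card S = (P.map (Int.castRingHom ℂ)).natDegree :=
    Polynomial.splits_iff_card_roots.mp (IsAlgClosed.splits _)
  have hlcPmap : (P.map (Int.castRingHom ℂ)).leadingCoeff = (P.leadingCoeff : ℂ) := by
    rw [Polynomial.leadingCoeff_map_of_leadingCoeff_ne_zero]
    · rfl
    · show (P.leadingCoeff : ℂ) ≠ 0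
      exact_mod_cast hlcP
  have hPfac : P.map (Int.castRingHom ℂ) =
      C ((P.leadingCoeff : ℂ)) * (S.map fun μ => X - C μ).prod := by
    rw [← hlcPmap]
    exact (Polynomial.C_leadingCoeff_mul_prod_multiset_X_sub_C hcardS).symm
  have hevalP : ∀ z : ℂ, (P.map (Int.castRingHom ℂ)).eval z =
      (P.leadingCoeff : ℂ) * (S.map fun μ => z - μ).prod := by
    intro z
    conv_lhs => rw [hPfac]
    rw [Polynomial.eval_mul, Polynomial.eval_C, Polynomial.eval_multiset_prod,
      Multiset.map_map]
    refine congrArg _ (congrArg Multiset.prod (Multiset.map_congr rfl ?_))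
    intro μ _
    simp
  -- factorization of p over ℂ
  have hRroots : (p.map (Int.castRingHom ℂ)).roots = R := by rw [hmapmap]
  have hcardR' : Multiset.card R = (p.map (Int.castRingHom ℂ)).natDegree := by
    rw [hmapmap]
    exact Polynomial.splits_iff_card_roots.mp (IsAlgClosed.splits _)

  have hlcpmap : (p.map (Int.castRingHom ℂ)).leadingCoeff = (p.leadingCoeff : ℂ) := by
    rw [Polynomial.leadingCoeff_map_of_leadingCoeff_ne_zero]
    · rfl
    · show (p.leadingCoeff : ℂ) ≠ 0
      exact_mod_cast hlead.ne'
  have hpfac : p.map (Int.castRingHom ℂ) =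
      C ((p.leadingCoeff : ℂ)) * (R.map fun w => X - C w).prod := by
    rw [← hlcpmap, ← hRroots]
    exact (Polynomial.C_leadingCoeff_mul_prod_multiset_X_sub_C (hRroots ▸ hcardR')).symm
  have hevalp : ∀ z : ℂ, (p.map (Int.castRingHom ℂ)).eval z =
      (p.leadingCoeff : ℂ) * (R.map fun w => z - w).prod := by
    intro z
    conv_lhs => rw [hpfac]
    rw [Polynomial.eval_mul, Polynomial.eval_C, Polynomial.eval_multiset_prod,
      Multiset.map_map]
    refine congrArg _ (congrArg Multiset.prod (Multiset.map_congr rfl ?_))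
    intro w _
    simp
  -- the swap identity
  have hid : (p.leadingCoeff : ℂ) ^ P.natDegree *
      (R.map fun z => (P.map (Int.castRingHom ℂ)).eval z).prod =
      (P.leadingCoeff : ℂ) ^ Multiset.card R *
        (S.map fun μ => (-1 : ℂ) ^ Multiset.card R *
          (p.map (Int.castRingHom ℂ)).eval μ).prod := by
    have e1 : (R.map fun z => (P.map (Int.castRingHom ℂ)).eval z).prod =
        (P.leadingCoeff : ℂ) ^ Multiset.card R *
          (R.map fun z => (S.map fun μ => z - μ).prod).prod := by
      rw [Multiset.map_congr rfl fun z _ => hevalP z]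
      exact prod_map_const_mul R _ _
    have e2 : (R.map fun z => (S.map fun μ => z - μ).prod).prod =
        (S.map fun μ => (R.map fun z => z - μ).prod).prod :=
      Multiset.prod_map_prod_map R S
    have e3 : ∀ μ : ℂ, (p.leadingCoeff : ℂ) * (R.map fun z => z - μ).prod =
        (-1 : ℂ) ^ Multiset.card R * (p.map (Int.castRingHom ℂ)).eval μ := by
      intro μ
      have h4 : (R.map fun z => z - μ).prod =
          (-1 : ℂ) ^ Multiset.card R * (R.map fun z => μ - z).prod := by
        rw [Multiset.map_congr rfl (fun z _ => by ring_nf :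
          ∀ z ∈ R, z - μ = (-1 : ℂ) * (μ - z))]
        exact prod_map_const_mul R _ _
      rw [h4, hevalp μ]
      ring
    have e4 : (p.leadingCoeff : ℂ) ^ P.natDegree *
        (S.map fun μ => (R.map fun z => z - μ).prod).prod =
        (S.map fun μ => (p.leadingCoeff : ℂ) * (R.map fun z => z - μ).prod).prod := by
      rw [prod_map_const_mul S _ _, hcardS, hdegPmap]
    rw [e1, e2, ← mul_assoc, mul_comm ((p.leadingCoeff : ℂ) ^ P.natDegree) _, mul_assoc,
      e4, Multiset.map_congr rfl fun μ _ => e3 μ]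
  -- integrality
  have hSint : ∀ μ ∈ S, IsIntegral ℤ μ := by
    intro μ hμ
    have hev : Polynomial.aeval μ P = 0 := by
      have h5 : (P.map (Int.castRingHom ℂ)).IsRoot μ := Polynomial.isRoot_of_mem_roots hμ
      rw [Polynomial.IsRoot, Polynomial.eval_map] at h5
      rwa [Polynomial.aeval_def, algebraMap_int_eq]
    rcases hb with h1 | h1
    · exact ⟨P, h1, by rw [← Polynomial.aeval_def]; exact hev⟩
    · refine ⟨-P, ?_, by rw [← Polynomial.aeval_def, map_neg, hev, neg_zero]⟩
      show (-P).leadingCoeff = 1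
      rw [Polynomial.leadingCoeff_neg, h1, neg_neg]
  have hfactint : ∀ μ ∈ S, IsIntegral ℤ
      ((-1 : ℂ) ^ Multiset.card R * (p.map (Int.castRingHom ℂ)).eval μ) := by
    intro μ hμ
    apply IsIntegral.mul
    · apply IsIntegral.pow
      have : ((-1 : ℤ) : ℂ) = (-1 : ℂ) := by push_cast; ring
      exact this ▸ isIntegral_algebraMap (x := (-1 : ℤ))
    · have h6 : (p.map (Int.castRingHom ℂ)).eval μ = Polynomial.aeval μ p := by
        rw [Polynomial.eval_map, Polynomial.aeval_def, algebraMap_int_eq]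
      rw [h6]
      exact IsIntegral.of_mem_of_fg _ (hSint μ hμ).fg_adjoin_singleton _
        (Polynomial.aeval_mem_adjoin_singleton ℤ μ)
  have hTint : IsIntegral ℤ ((p.leadingCoeff : ℂ) ^ P.natDegree *
      (R.map fun z => (P.map (Int.castRingHom ℂ)).eval z).prod) := by
    rw [hid]
    apply IsIntegral.mul
    · have : ((P.leadingCoeff ^ Multiset.card R : ℤ) : ℂ) =
          (P.leadingCoeff : ℂ) ^ Multiset.card R := by push_cast; ring
      exact this ▸ isIntegral_algebraMap (x := P.leadingCoeff ^ Multiset.card R)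
    · apply IsIntegral.multiset_prod
      intro x hx
      obtain ⟨μ, hμ, rfl⟩ := Multiset.mem_map.mp hx
      exact hfactint μ hμ
  -- the rational integer
  set q' : ℚ := (p.leadingCoeff : ℚ) ^ P.natDegree * Algebra.norm ℚ u with hq'
  have halg : algebraMap ℚ ℂ q' = (p.leadingCoeff : ℂ) ^ P.natDegree *
      (R.map fun z => (P.map (Int.castRingHom ℂ)).eval z).prod := by
    rw [hq', map_mul, map_pow, hnorm]
    norm_num
  have hq'int : IsIntegral ℤ q' :=
    IsIntegral.tower_bot (algebraMap ℚ ℂ).injective (by rw [halg]; exact hTint)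
  obtain ⟨k, hk⟩ := IsIntegrallyClosed.isIntegral_iff.mp hq'int
  have hnormne : Algebra.norm ℚ u ≠ 0 := Algebra.norm_ne_zero_iff.mpr hu0
  have hq'ne : q' ≠ 0 := by
    apply mul_ne_zero _ hnormne
    apply pow_ne_zero
    exact_mod_cast hlead.ne'
  have hk0 : k ≠ 0 := by
    rintro rfl
    rw [map_zero] at hk
    exact hq'ne hk.symm
  have honele : (1 : ℚ) ≤ |q'| := by
    rw [← hk]
    have : ((1 : ℤ) : ℚ) ≤ |((k : ℤ) : ℚ)| := by
      rw [← Int.cast_abs]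
      exact_mod_cast Int.one_le_abs hk0
    simpa using this
  -- conclude
  have habs : ‖(algebraMap ℚ ℂ q')‖ = |(q' : ℝ)| := by
    have : algebraMap ℚ ℂ q' = ((q' : ℝ) : ℂ) := by
      norm_cast
    rw [this, Complex.norm_real, Real.norm_eq_abs]
  have hfin : (1 : ℝ) ≤ ‖(algebraMap ℚ ℂ q')‖ := by
    rw [habs]
    have : ((1 : ℚ) : ℝ) ≤ |((q' : ℚ) : ℝ)| := by
      rw [← Rat.cast_abs]
      exact_mod_cast honele
    simpa using this
  rw [halg] at hfin
  rw [norm_mul, norm_pow] at hfin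
  have h7 : ‖((p.leadingCoeff : ℂ))‖ = (p.leadingCoeff : ℝ) := by
    rw [Complex.norm_intCast]
    exact abs_of_pos (by exact_mod_cast hlead)
  rw [h7, abs_mprod, Multiset.map_map] at hfin
  rw [hRroots]
  exact hfin

end Stmt9Aux

end


theorem stmt9 (l : ℝ) (p : Polynomial ℤ)
    (hirr : Irreducible p) (hroot : Polynomial.aeval l p = 0)
    (hlead : 0 < p.leadingCoeff)
    (m : ℕ) (hm : m = Multiset.card
      (((p.map (Int.castRingHom ℂ)).roots).filter fun z => ‖z‖ = 1))
    (M : ℝ) (hM : M = (p.leadingCoeff : ℝ) *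
      ((((p.map (Int.castRingHom ℂ)).roots).filter fun z => 1 < ‖z‖).map
        fun z => ‖z‖).prod) :
    ∃ c > (0 : ℝ), ∀ d : ℕ, 0 < d → ∀ P : Polynomial ℤ,
      P.natDegree ≤ d → (∀ i, P.coeff i ∈ ({-1, 0, 1} : Set ℤ)) →
      Polynomial.aeval l P = 0 ∨
        c * ((d : ℝ) ^ m)⁻¹ * (M ^ d)⁻¹ ≤ |Polynomial.aeval l P| := by
  classical
  have hp0 : p ≠ 0 := hirr.ne_zero
  have hmapne : p.map (Int.castRingHom ℂ) ≠ 0 :=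
    (Polynomial.map_ne_zero_iff Int.cast_injective).mpr hp0
  set R : Multiset ℂ := (p.map (Int.castRingHom ℂ)).roots with hRdef
  have hlC : ((l : ℂ)) ∈ R := by
    rw [hRdef, Polynomial.mem_roots hmapne]
    show (p.map (Int.castRingHom ℂ)).IsRoot (l : ℂ)
    rw [Polynomial.IsRoot, Polynomial.eval_map, ← algebraMap_int_eq, ← Polynomial.aeval_def]
    have h8 := Polynomial.aeval_algHom_apply (Complex.ofRealAm.restrictScalars ℤ) l p
    rw [hroot, map_zero] at h8
    exact h8
  set R' : Multiset ℂ := R.erase (l : ℂ) with hR'def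
  have hcons : R = (l : ℂ) ::ₘ R' := (Multiset.cons_erase hlC).symm
  -- constants
  set C0 : ℝ := (R'.map fun z => Stmt9Aux.bconst (‖z‖)).prod with hC0
  have hC0pos : 0 < C0 := by
    apply Stmt9Aux.mprod_pos
    intro x hx
    obtain ⟨z, hz, rfl⟩ := Multiset.mem_map.mp hx
    exact Stmt9Aux.bconst_pos (norm_nonneg z)
  set Pi' : ℝ := (R'.map fun z => max 1 (‖z‖)).prod with hPi'
  have hPi'one : 1 ≤ Pi' := by
    apply Stmt9Aux.mprod_one
    intro x hx
    obtain ⟨z, hz, rfl⟩ := Multiset.mem_map.mp hx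
    exact le_max_left 1 _
  have hPi'pos : 0 < Pi' := lt_of_lt_of_le one_pos hPi'one
  set m' : ℕ := Multiset.card (R'.filter fun z => ‖z‖ = 1) with hm'def
  have hm'le : m' ≤ m := by
    rw [hm'def, hm]
    exact Multiset.card_le_card (Multiset.filter_le_filter _ (Multiset.erase_le _ _))
  have ha1 : (1 : ℝ) ≤ (p.leadingCoeff : ℝ) := by exact_mod_cast hlead
  have hapos : (0 : ℝ) < (p.leadingCoeff : ℝ) := lt_of_lt_of_le one_pos ha1
  -- M = a * Pi where Pi is prod over all roots of max 1 |z|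
  have hMeq : M = (p.leadingCoeff : ℝ) * (R.map fun z => max 1 (‖z‖)).prod := by
    rw [hM]
    congr 1
    have hsplit := Multiset.filter_add_not (fun z => 1 < ‖z‖) R
    conv_rhs => rw [← hsplit]
    rw [Multiset.map_add, Multiset.prod_add]
    have e1 : ((R.filter fun z => 1 < ‖z‖).map
        fun z => max 1 (‖z‖)).prod =
        ((R.filter fun z => 1 < ‖z‖).map fun z => ‖z‖).prod := by
      refine congrArg Multiset.prod (Multiset.map_congr rfl ?_)
      intro z hz
      exact max_eq_right (le_of_lt (Multiset.mem_filter.mp hz).2)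
    have e2 : ((R.filter fun z => ¬ 1 < ‖z‖).map
        fun z => max 1 (‖z‖)).prod = 1 := by
      apply Multiset.prod_eq_one
      intro x hx
      obtain ⟨z, hz, rfl⟩ := Multiset.mem_map.mp hx
      exact max_eq_left (not_lt.mp (Multiset.mem_filter.mp hz).2)
    rw [e1, e2, mul_one]
  have hMpos : 0 < M := by
    rw [hMeq]
    apply mul_pos hapos
    apply Stmt9Aux.mprod_pos
    intro x hx
    obtain ⟨z, hz, rfl⟩ := Multiset.mem_map.mp hx
    exact lt_of_lt_of_le one_pos (le_max_left 1 _)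
  have haPi : (p.leadingCoeff : ℝ) * Pi' ≤ M := by
    rw [hMeq]
    apply mul_le_mul_of_nonneg_left _ (le_of_lt hapos)
    conv_rhs => rw [hcons]
    rw [Multiset.map_cons, Multiset.prod_cons]
    calc Pi' = 1 * Pi' := (one_mul _).symm
      _ ≤ max 1 (‖(l : ℂ)‖) * Pi' :=
        mul_le_mul_of_nonneg_right (le_max_left 1 _) (le_of_lt hPi'pos)
  -- the constant
  refine ⟨(C0 * 2 ^ m)⁻¹, by positivity, ?_⟩
  intro d hd P hdeg hcoef
  by_cases h0 : Polynomial.aeval l P = 0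
  · exact Or.inl h0
  right
  have hP0 : P ≠ 0 := by rintro rfl; simp at h0
  have hb : P.leadingCoeff = 1 ∨ P.leadingCoeff = -1 := by
    have hne := Polynomial.leadingCoeff_ne_zero.mpr hP0
    have hmem := hcoef P.natDegree
    rw [Polynomial.leadingCoeff] at hne ⊢
    rcases hmem with h | h | h
    · exact Or.inr h
    · exact absurd h hne
    · exact Or.inl h
  have hkey := Stmt9Aux.key l p hirr hroot hlead P h0 hb
  set X : ℝ := |Polynomial.aeval l P| with hX
  have hXpos : 0 < X := abs_pos.mpr h0
  -- split off the root l
  have hgl : ‖((P.map (Int.castRingHom ℂ)).eval (l : ℂ))‖ = X := by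
    have h8 : (P.map (Int.castRingHom ℂ)).eval (l : ℂ) = ((Polynomial.aeval l P : ℝ) : ℂ) := by
      rw [Polynomial.eval_map, ← algebraMap_int_eq, ← Polynomial.aeval_def]
      exact Polynomial.aeval_algHom_apply (Complex.ofRealAm.restrictScalars ℤ) l P
    rw [h8, Complex.norm_real, Real.norm_eq_abs, hX]
  have hsplit : ((p.map (Int.castRingHom ℂ)).roots.map
      fun z => ‖((P.map (Int.castRingHom ℂ)).eval z)‖).prod =
      X * (R'.map fun z => ‖((P.map (Int.castRingHom ℂ)).eval z)‖).prod := by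
    rw [← hRdef, hcons, Multiset.map_cons, Multiset.prod_cons, hgl]
  rw [hsplit] at hkey
  -- bound the product over R'
  have hbound : (R'.map fun z => ‖((P.map (Int.castRingHom ℂ)).eval z)‖).prod ≤
      C0 * (2 * (d : ℝ)) ^ m' * Pi' ^ d := by
    have hb1 : (R'.map fun z => ‖((P.map (Int.castRingHom ℂ)).eval z)‖).prod ≤
        (R'.map fun z => Stmt9Aux.bconst (‖z‖) *
          (if ‖z‖ = 1 then 2 * (d : ℝ) else 1) * max 1 (‖z‖) ^ d).prod := by
      apply Stmt9Aux.mprod_le_mprod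
      · intro z _
        exact norm_nonneg _
      · intro z _
        exact le_trans (Stmt9Aux.eval_abs_le z d P hdeg hcoef)
          (Stmt9Aux.geom_bound (‖z‖) (norm_nonneg z) d hd)
    refine le_trans hb1 (le_of_eq ?_)
    have e3 : (R'.map fun z => Stmt9Aux.bconst (‖z‖) *
        (if ‖z‖ = 1 then 2 * (d : ℝ) else 1) * max 1 (‖z‖) ^ d).prod =
        (R'.map fun z => Stmt9Aux.bconst (‖z‖)).prod *
        (R'.map fun z => (if ‖z‖ = 1 then 2 * (d : ℝ) else 1)).prod *
        (R'.map fun z => max 1 (‖z‖) ^ d).prod := by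
      rw [← Multiset.prod_map_mul, ← Multiset.prod_map_mul]
    rw [e3, Stmt9Aux.prod_map_ite, Multiset.prod_map_pow]
  -- assemble
  have h2d : (1 : ℝ) ≤ 2 * (d : ℝ) := by
    have : (1 : ℝ) ≤ (d : ℝ) := by exact_mod_cast hd
    linarith
  have hchain : (1 : ℝ) ≤ X * (C0 * (2 * (d : ℝ)) ^ m * M ^ d) := by
    have s1 : (1 : ℝ) ≤ (p.leadingCoeff : ℝ) ^ P.natDegree *
        (X * (C0 * (2 * (d : ℝ)) ^ m' * Pi' ^ d)) := by
      refine le_trans hkey ?_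
      apply mul_le_mul_of_nonneg_left _ (by positivity)
      exact mul_le_mul_of_nonneg_left hbound (le_of_lt hXpos)
    have s2 : (p.leadingCoeff : ℝ) ^ P.natDegree *
        (X * (C0 * (2 * (d : ℝ)) ^ m' * Pi' ^ d)) ≤ (p.leadingCoeff : ℝ) ^ d *
        (X * (C0 * (2 * (d : ℝ)) ^ m * Pi' ^ d)) := by
      have t1 : (p.leadingCoeff : ℝ) ^ P.natDegree ≤ (p.leadingCoeff : ℝ) ^ d :=
        pow_le_pow_right₀ ha1 hdeg
      have t2 : (2 * (d : ℝ)) ^ m' ≤ (2 * (d : ℝ)) ^ m := pow_le_pow_right₀ h2d hm'le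
      have t3 : X * (C0 * (2 * (d : ℝ)) ^ m' * Pi' ^ d) ≤
          X * (C0 * (2 * (d : ℝ)) ^ m * Pi' ^ d) := by
        apply mul_le_mul_of_nonneg_left _ (le_of_lt hXpos)
        apply mul_le_mul_of_nonneg_right _ (by positivity)
        exact mul_le_mul_of_nonneg_left t2 (le_of_lt hC0pos)
      calc (p.leadingCoeff : ℝ) ^ P.natDegree * (X * (C0 * (2 * (d : ℝ)) ^ m' * Pi' ^ d))
          ≤ (p.leadingCoeff : ℝ) ^ P.natDegree * (X * (C0 * (2 * (d : ℝ)) ^ m * Pi' ^ d)) :=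
            mul_le_mul_of_nonneg_left t3 (by positivity)
        _ ≤ (p.leadingCoeff : ℝ) ^ d * (X * (C0 * (2 * (d : ℝ)) ^ m * Pi' ^ d)) :=
            mul_le_mul_of_nonneg_right t1 (by positivity)
    have s3 : (p.leadingCoeff : ℝ) ^ d * (X * (C0 * (2 * (d : ℝ)) ^ m * Pi' ^ d)) ≤
        X * (C0 * (2 * (d : ℝ)) ^ m * M ^ d) := by
      have t4 : (p.leadingCoeff : ℝ) ^ d * Pi' ^ d ≤ M ^ d := by
        rw [← mul_pow]
        exact pow_le_pow_left₀ (by positivity) haPi d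
      calc (p.leadingCoeff : ℝ) ^ d * (X * (C0 * (2 * (d : ℝ)) ^ m * Pi' ^ d))
          = X * (C0 * (2 * (d : ℝ)) ^ m * ((p.leadingCoeff : ℝ) ^ d * Pi' ^ d)) := by ring
        _ ≤ X * (C0 * (2 * (d : ℝ)) ^ m * M ^ d) := by
            apply mul_le_mul_of_nonneg_left _ (le_of_lt hXpos)
            exact mul_le_mul_of_nonneg_left t4 (by positivity)
    exact le_trans s1 (le_trans s2 s3)
  -- finish
  have hdpos : (0 : ℝ) < (d : ℝ) := by exact_mod_cast hd
  have hYpos : 0 < C0 * (2 * (d : ℝ)) ^ m * M ^ d := by positivity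
  have hfinal : (C0 * (2 * (d : ℝ)) ^ m * M ^ d)⁻¹ ≤ X := by
    rw [inv_le_iff_one_le_mul₀ hYpos]
    linarith [hchain]
  have heq : (C0 * 2 ^ m)⁻¹ * ((d : ℝ) ^ m)⁻¹ * (M ^ d)⁻¹ =
      (C0 * (2 * (d : ℝ)) ^ m * M ^ d)⁻¹ := by
    rw [mul_pow]
    field_simp
  rw [heq]
  exact hfinal
end

section
/- Let λ ∈ (1/2,1), A > 0, d ∈ ℤ_{>0}, and suppose |λ - ξ| > exp(-Ad) for every root ξ of every nonzero polynomial of degree at most d-1 with coefficients in {-1,0,1}. Then there exists B ∈ ℤ_{>0} depending only on A and λ such that |P(λ)| > λ^{Bd} for every nonzero polynomial P of degree at most d-1 with coefficients in {-1,0,1}. -/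
open Polynomial

noncomputable def Complex.abs : AbsoluteValue ℂ ℝ := NormedField.toAbsoluteValue ℂ

lemma Complex.norm_eq_abs (z : ℂ) : ‖z‖ = Complex.abs z := rfl

lemma Complex.abs_conj (z : ℂ) : Complex.abs ((starRingEnd ℂ) z) = Complex.abs z :=
  Complex.norm_conj z

lemma Complex.abs_ofReal (r : ℝ) : Complex.abs (r : ℂ) = |r| := Complex.norm_real r

private lemma ms_pow_card_le_prod (s : Multiset ℝ) (b : ℝ) (hb : 0 ≤ b)
    (h : ∀ x ∈ s, b ≤ x) : b ^ Multiset.card s ≤ s.prod := by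
  induction s using Multiset.induction with
  | empty => simp
  | cons a s ih =>
    have hba : b ≤ a := h a (Multiset.mem_cons_self a s)
    have hsp : b ^ Multiset.card s ≤ s.prod :=
      ih (fun x hx => h x (Multiset.mem_cons_of_mem hx))
    have hb' : (0:ℝ) ≤ b ^ Multiset.card s := pow_nonneg hb _
    simp only [Multiset.card_cons, Multiset.prod_cons, pow_succ]
    calc b ^ Multiset.card s * b ≤ s.prod * a :=
        mul_le_mul hsp hba hb (le_trans hb' hsp)
      _ = a * s.prod := mul_comm _ _

private lemma ms_prod_le_pow_card (s : Multiset ℝ) (b : ℝ) (hb : 0 ≤ b)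
    (h0 : ∀ x ∈ s, 0 ≤ x) (h : ∀ x ∈ s, x ≤ b) :
    s.prod ≤ b ^ Multiset.card s := by
  induction s using Multiset.induction with
  | empty => simp
  | cons a s ih =>
    have ha0 : 0 ≤ a := h0 a (Multiset.mem_cons_self a s)
    have hab : a ≤ b := h a (Multiset.mem_cons_self a s)
    have ihs : s.prod ≤ b ^ Multiset.card s :=
      ih (fun x hx => h0 x (Multiset.mem_cons_of_mem hx))
        (fun x hx => h x (Multiset.mem_cons_of_mem hx))
    have hsp0 : (0:ℝ) ≤ s.prod :=
      Multiset.prod_nonneg (fun x hx => h0 x (Multiset.mem_cons_of_mem hx))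
    simp only [Multiset.card_cons, Multiset.prod_cons, pow_succ]
    calc a * s.prod ≤ b * b ^ Multiset.card s := mul_le_mul hab ihs hsp0 hb
      _ = b ^ Multiset.card s * b := mul_comm _ _

private lemma abs_prod_map (T : Multiset ℂ) (f : ℂ → ℂ) :
    Complex.abs ((T.map f).prod) = (T.map (fun ξ => Complex.abs (f ξ))).prod := by
  rw [map_multiset_prod, Multiset.map_map]
  rfl

private lemma blaschke_bound (R R' : ℝ) (hR0 : 0 < R) (hRR' : R < R') (hR'1 : R' < 1)
    (Q : Polynomial ℂ) (hc : ∀ i, Complex.abs (Q.coeff i) ≤ 1)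
    (h0 : 1 ≤ Complex.abs (Q.coeff 0)) (T : Multiset ℂ) (hT : T ≤ Q.roots)
    (hTmem : ∀ ξ ∈ T, Complex.abs ξ ≤ R) :
    (R'/R) ^ Multiset.card T ≤ 1/(1-R') := by
  have hR'0 : (0:ℝ) < R' := lt_trans hR0 hRR'
  have h1R' : (0:ℝ) < 1 - R' := by linarith
  obtain ⟨S, hQS⟩ : (T.map fun a => X - C a).prod ∣ Q :=
    dvd_trans (Multiset.prod_dvd_prod_of_le (Multiset.map_le_map hT))
      (Polynomial.prod_multiset_X_sub_C_dvd Q)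
  set n := Multiset.card T with hn
  set G : Polynomial ℂ :=
    (T.map (fun ξ => C ((R':ℂ)^2) - C ((starRingEnd ℂ) ξ) * X)).prod * S with hG
  have hGeval : ∀ z : ℂ,
      G.eval z = (T.map (fun ξ => (R':ℂ)^2 - (starRingEnd ℂ) ξ * z)).prod * S.eval z := by
    intro z
    simp [hG, Polynomial.eval_multiset_prod, Multiset.map_map, Function.comp]
  have hQeval : ∀ z : ℂ,
      Q.eval z = (T.map (fun ξ => z - ξ)).prod * S.eval z := by
    intro z
    rw [hQS]
    simp [Polynomial.eval_multiset_prod, Multiset.map_map, Function.comp]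
  have hQbound : ∀ z : ℂ, Complex.abs z ≤ R' → Complex.abs (Q.eval z) ≤ 1/(1-R') := by
    intro z hz
    rw [Polynomial.eval_eq_sum_range]
    calc Complex.abs (∑ i ∈ Finset.range (Q.natDegree + 1), Q.coeff i * z ^ i)
        ≤ ∑ i ∈ Finset.range (Q.natDegree + 1), Complex.abs (Q.coeff i * z ^ i) :=
          AbsoluteValue.sum_le _ _ _
      _ ≤ ∑ i ∈ Finset.range (Q.natDegree + 1), R' ^ i := by
          apply Finset.sum_le_sum
          intro i _
          rw [map_mul, map_pow]
          calc Complex.abs (Q.coeff i) * Complex.abs z ^ i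
              ≤ 1 * R' ^ i :=
                mul_le_mul (hc i) (pow_le_pow_left₀ (AbsoluteValue.nonneg _ _) hz i)
                  (pow_nonneg (AbsoluteValue.nonneg _ _) i) zero_le_one
            _ = R' ^ i := one_mul _
      _ ≤ 1/(1-R') := by
          have hpow : (0:ℝ) ≤ R' ^ (Q.natDegree + 1) := pow_nonneg (le_of_lt hR'0) _
          have hsum : ∑ i ∈ Finset.range (Q.natDegree + 1), R' ^ i
              = (1 - R' ^ (Q.natDegree + 1)) / (1 - R') := by
            rw [geom_sum_eq (ne_of_lt hR'1)]
            rw [div_eq_div_iff (by linarith) (by linarith)]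
            ring
          rw [hsum]
          exact div_le_div₀ zero_le_one (by linarith) h1R' le_rfl
  have hsphere : ∀ z : ℂ, Complex.abs z = R' →
      Complex.abs (G.eval z) = R' ^ n * Complex.abs (Q.eval z) := by
    intro z hz
    have hcz : (starRingEnd ℂ) z * z = ((R':ℂ))^2 := by
      have h1 := Complex.mul_conj z
      have h2 : Complex.normSq z = R'^2 := by rw [← Complex.sq_norm, Complex.norm_eq_abs, hz]
      rw [mul_comm] at h1
      rw [h1, h2]
      push_cast
      ring
    have hfac : ∀ ξ : ℂ, (R':ℂ)^2 - (starRingEnd ℂ) ξ * z = (starRingEnd ℂ) (z - ξ) * z := by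
      intro ξ
      rw [map_sub, sub_mul, hcz]
    rw [hGeval z, hQeval z, map_mul, map_mul, abs_prod_map, abs_prod_map]
    have hmapeq : (T.map (fun ξ => Complex.abs ((R':ℂ)^2 - (starRingEnd ℂ) ξ * z)))
        = T.map (fun ξ => R' * Complex.abs (z - ξ)) := by
      apply Multiset.map_congr rfl
      intro ξ _
      rw [hfac ξ, map_mul, Complex.abs_conj, hz, mul_comm]
    rw [hmapeq, Multiset.prod_map_mul]
    simp only [Multiset.map_const', Multiset.prod_replicate]
    ring
  -- maximum modulus principle
  have hmax : Complex.abs (G.eval 0) ≤ R' ^ n * (1/(1-R')) := by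
    have hGdiff : Differentiable ℂ (fun z => G.eval z) := G.differentiable
    have h0mem : (0:ℂ) ∈ closure (Metric.ball (0:ℂ) R') := by
      rw [closure_ball (0:ℂ) (ne_of_gt hR'0)]
      exact Metric.mem_closedBall_self (le_of_lt hR'0)
    have := Complex.norm_le_of_forall_mem_frontier_norm_le
      (Metric.isBounded_ball (x := (0:ℂ)) (r := R')) hGdiff.diffContOnCl
      (C := R' ^ n * (1/(1-R'))) ?_ h0mem
    · exact this
    · intro z hz
      rw [frontier_ball (0:ℂ) (ne_of_gt hR'0)] at hz
      have hz' : Complex.abs z = R' := by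
        simpa [Complex.norm_eq_abs] using mem_sphere_zero_iff_norm.mp hz
      rw [Complex.norm_eq_abs, hsphere z hz']
      exact mul_le_mul_of_nonneg_left (hQbound z (le_of_eq hz'))
        (pow_nonneg (le_of_lt hR'0) n)
  -- evaluate at 0
  have hG0 : Complex.abs (G.eval 0) = (R'^2) ^ n * Complex.abs (S.eval 0) := by
    rw [hGeval 0, map_mul, abs_prod_map]
    congr 1
    have : (T.map (fun ξ => Complex.abs ((R':ℂ)^2 - (starRingEnd ℂ) ξ * 0)))
        = T.map (fun _ => R'^2) := by
      apply Multiset.map_congr rfl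
      intro ξ _
      rw [mul_zero, sub_zero, map_pow, Complex.abs_ofReal, abs_of_pos hR'0]
    rw [this]
    simp only [Multiset.map_const', Multiset.prod_replicate]
    rfl
  have hQ0 : Complex.abs (Q.eval 0) ≤ R ^ n * Complex.abs (S.eval 0) := by
    rw [hQeval 0, map_mul, abs_prod_map]
    apply mul_le_mul_of_nonneg_right _ (AbsoluteValue.nonneg _ _)
    have := ms_prod_le_pow_card (T.map (fun ξ => Complex.abs ((0:ℂ) - ξ))) R (le_of_lt hR0)
      ?_ ?_
    · simpa using this
    · intro x hx
      obtain ⟨a, _, rfl⟩ := Multiset.mem_map.mp hx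
      exact AbsoluteValue.nonneg _ _
    · intro x hx
      obtain ⟨a, ha, rfl⟩ := Multiset.mem_map.mp hx
      rw [zero_sub, map_neg_eq_map]
      exact hTmem a ha
  have h00 : 1 ≤ Complex.abs (Q.eval 0) := by
    rwa [← Polynomial.coeff_zero_eq_eval_zero]
  -- combine
  set a := Complex.abs (S.eval 0) with hadef
  have ha0 : 0 ≤ a := AbsoluteValue.nonneg _ _
  have h1 : 1 ≤ R ^ n * a := le_trans h00 hQ0
  have h2 : (R'^n)^2 * a ≤ R' ^ n * (1/(1-R')) := by
    calc (R'^n)^2 * a = (R'^2)^n * a := by rw [← pow_mul, ← pow_mul, mul_comm n 2]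
      _ = Complex.abs (G.eval 0) := hG0.symm
      _ ≤ R' ^ n * (1/(1-R')) := hmax
  have hu : (0:ℝ) < R' ^ n := pow_pos hR'0 n
  have hv : (0:ℝ) < R ^ n := pow_pos hR0 n
  have h2' : R' ^ n * a ≤ 1/(1-R') := by
    have := h2
    rw [pow_two, mul_assoc] at this
    exact le_of_mul_le_mul_left this hu
  rw [div_pow, div_le_iff₀ hv]
  calc R' ^ n ≤ R' ^ n * (R ^ n * a) := le_mul_of_one_le_right (le_of_lt hu) h1
    _ = (R' ^ n * a) * R ^ n := by ring
    _ ≤ 1/(1-R') * R ^ n := mul_le_mul_of_nonneg_right h2' (le_of_lt hv)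

private lemma count_bound (R R' : ℝ) (hR0 : 0 < R) (hRR' : R < R') (hR'1 : R' < 1)
    (P : Polynomial ℤ) (hP : P ≠ 0)
    (hcoeff : ∀ i, P.coeff i ∈ ({-1, 0, 1} : Set ℤ))
    (T : Multiset ℂ) (hT : T ≤ (P.map (Int.castRingHom ℂ)).roots)
    (hmem : ∀ ξ ∈ T, Complex.abs ξ ≤ R ∧ ξ ≠ 0) :
    (R'/R) ^ Multiset.card T ≤ 1/(1-R') := by
  classical
  set Pc := P.map (Int.castRingHom ℂ) with hPcdef
  have hPc : Pc ≠ 0 := (Polynomial.map_ne_zero_iff Int.cast_injective).mpr hP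
  set k := Polynomial.rootMultiplicity 0 Pc with hk
  obtain ⟨Qc, hPQ⟩ : X ^ k ∣ Pc := by
    simpa using Polynomial.pow_rootMultiplicity_dvd Pc 0
  have hQc : Qc ≠ 0 := fun h => hPc (by rw [hPQ, h, mul_zero])
  have hQcoeff : ∀ i, Qc.coeff i = ((P.coeff (i + k) : ℤ) : ℂ) := by
    intro i
    have := Polynomial.coeff_X_pow_mul Qc k i
    rw [← hPQ] at this
    rw [← this, hPcdef, Polynomial.coeff_map]
    rfl
  have hQabs : ∀ i, Complex.abs (Qc.coeff i) ≤ 1 := by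
    intro i
    rw [hQcoeff i]
    rcases hcoeff (i + k) with h | h | h <;> rw [h] <;> norm_num
  have hQ00 : Qc.coeff 0 ≠ 0 := by
    intro h
    have hXdvd : X ∣ Qc := Polynomial.X_dvd_iff.mpr h
    obtain ⟨Q', hQ'⟩ := hXdvd
    have : (X : Polynomial ℂ) ^ (k + 1) ∣ Pc := ⟨Q', by rw [hPQ, hQ', pow_succ]; ring⟩
    have hnot := Polynomial.pow_rootMultiplicity_not_dvd hPc (0:ℂ)
    rw [map_zero, sub_zero] at hnot
    exact hnot this
  have hQ0abs : 1 ≤ Complex.abs (Qc.coeff 0) := by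
    rw [hQcoeff 0]
    have hne : P.coeff (0 + k) ≠ 0 := by
      intro h
      apply hQ00
      rw [hQcoeff 0, h]
      norm_num
    rcases hcoeff (0 + k) with h | h | h
    · rw [h]; simp
    · exact absurd h hne
    · rw [h]; simp
  have hTQ : T ≤ Qc.roots := by
    rw [Multiset.le_iff_count]
    intro x
    by_cases hx : x ∈ T
    · have hx0 : x ≠ 0 := (hmem x hx).2
      have h1 : T.count x ≤ Pc.roots.count x := Multiset.le_iff_count.mp hT x
      have h2 : Pc.roots.count x = Qc.roots.count x := by
        rw [Polynomial.count_roots, Polynomial.count_roots]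
        rw [hPQ, Polynomial.rootMultiplicity_mul (by rw [← hPQ]; exact hPc)]
        have : Polynomial.rootMultiplicity x ((X:Polynomial ℂ) ^ k) = 0 := by
          apply Polynomial.rootMultiplicity_eq_zero
          simp [Polynomial.IsRoot, hx0]
        rw [this, zero_add]
      rw [← h2]
      exact h1
    · simp [Multiset.count_eq_zero_of_notMem hx]
  exact blaschke_bound R R' hR0 hRR' hR'1 Qc hQabs hQ0abs T hTQ
    (fun ξ hξ => (hmem ξ hξ).1)

theorem stmt16 (l A : ℝ) (hl : l ∈ Set.Ioo (1 / 2 : ℝ) 1) (hA : 0 < A) :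
    ∃ B : ℕ, 0 < B ∧ ∀ d : ℕ, 0 < d →
      (∀ P : Polynomial ℤ, P ≠ 0 → P.natDegree ≤ d - 1 →
          (∀ i, P.coeff i ∈ ({-1, 0, 1} : Set ℤ)) →
          ∀ ξ : ℂ, Polynomial.aeval ξ P = 0 →
            Real.exp (-A * d) < ‖(l : ℂ) - ξ‖) →
      ∀ P : Polynomial ℤ, P ≠ 0 → P.natDegree ≤ d - 1 →
        (∀ i, P.coeff i ∈ ({-1, 0, 1} : Set ℤ)) →
        l ^ (B * d) < |Polynomial.aeval l P| := by
  classical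
  obtain ⟨hl1, hl2⟩ := hl
  set R : ℝ := (1 + l)/2 with hRdef
  set R' : ℝ := (3 + l)/4 with hR'def
  set c : ℝ := (1 - l)/2 with hcdef
  have hR0 : 0 < R := by rw [hRdef]; linarith
  have hRR' : R < R' := by rw [hRdef, hR'def]; linarith
  have hR'1 : R' < 1 := by rw [hR'def]; linarith
  have hc0 : 0 < c := by rw [hcdef]; linarith
  have hc1 : c < 1 := by rw [hcdef]; linarith
  have hb1 : 1 < R'/R := (one_lt_div hR0).mpr hRR'
  set m : ℕ := Nat.ceil (Real.logb (R'/R) (1/(1-R'))) with hmdef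
  -- the count bound in usable form
  have hcount : ∀ (P : Polynomial ℤ), P ≠ 0 →
      (∀ i, P.coeff i ∈ ({-1, 0, 1} : Set ℤ)) →
      ∀ T : Multiset ℂ, T ≤ (P.map (Int.castRingHom ℂ)).roots →
      (∀ ξ ∈ T, Complex.abs ξ ≤ R ∧ ξ ≠ 0) → Multiset.card T ≤ m := by
    intro P hP hco T hT hmem
    have hkey := count_bound R R' hR0 hRR' hR'1 P hP hco T hT hmem
    have hlogb : (Multiset.card T : ℝ) ≤ Real.logb (R'/R) (1/(1-R')) := by
      have hbpos : (0:ℝ) < R'/R := lt_trans one_pos hb1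
      have hppos : (0:ℝ) < (R'/R) ^ Multiset.card T := pow_pos hbpos _
      have hlog := Real.log_le_log hppos hkey
      rw [Real.log_pow] at hlog
      have hlb : 0 < Real.log (R'/R) := Real.log_pos hb1
      rw [Real.logb, le_div_iff₀ hlb]
      exact hlog
    have := le_trans hlogb (Nat.le_ceil _)
    exact_mod_cast this
  -- choose B
  obtain ⟨n₀, hn₀⟩ := exists_pow_lt_of_lt_one
    (mul_pos (Real.exp_pos (-A * m)) hc0) hl2
  refine ⟨n₀ + 1, Nat.succ_pos _, ?_⟩
  intro d hd hroot P hP hdeg hcoeff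
  have hl0 : (0:ℝ) < l := by linarith
  set Pc := P.map (Int.castRingHom ℂ) with hPcdef
  have hPc : Pc ≠ 0 := (Polynomial.map_ne_zero_iff Int.cast_injective).mpr hP
  -- relate the real and complex evaluations
  have haeval : Complex.abs (Pc.eval (l:ℂ)) = |Polynomial.aeval l P| := by
    have h1 : (Polynomial.aeval (l:ℂ) P) = Pc.eval (l:ℂ) := by
      rw [Polynomial.aeval_def, Polynomial.eval₂_eq_eval_map, hPcdef]
      norm_cast
    have h2 : (Polynomial.aeval (l:ℂ) P) = ((Polynomial.aeval l P : ℝ) : ℂ) := by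
      simpa using Polynomial.aeval_algebraMap_apply ℂ l P
    rw [← h1, h2, Complex.abs_ofReal]
  -- factorization
  have hsplits : Pc.Splits := IsAlgClosed.splits Pc
  have hfact := hsplits.eq_prod_roots
  have heval : Complex.abs (Pc.eval (l:ℂ))
      = Complex.abs Pc.leadingCoeff
        * (Pc.roots.map (fun a => Complex.abs ((l:ℂ) - a))).prod := by
    conv_lhs => rw [hfact]
    rw [Polynomial.eval_mul, Polynomial.eval_C, map_mul, Polynomial.eval_multiset_prod,
      Multiset.map_map]
    congr 1
    have : (Pc.roots.map ((fun a => Polynomial.eval (l:ℂ) a) ∘ fun a => X - C a))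
        = Pc.roots.map (fun a => (l:ℂ) - a) := by
      apply Multiset.map_congr rfl
      intro a _
      simp
    rw [this, abs_prod_map]
  -- leading coefficient has absolute value 1
  have hlead : Complex.abs Pc.leadingCoeff = 1 := by
    have hmap : Pc.leadingCoeff = ((P.leadingCoeff : ℤ) : ℂ) := by
      rw [hPcdef]
      exact Polynomial.leadingCoeff_map_of_injective (f := Int.castRingHom ℂ) Int.cast_injective P
    have hlc : P.leadingCoeff ≠ 0 := Polynomial.leadingCoeff_ne_zero.mpr hP
    have hlc' : P.coeff P.natDegree ≠ 0 := hlc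
    rcases hcoeff P.natDegree with h | h | h
    · rw [hmap]
      unfold Polynomial.leadingCoeff
      rw [h]
      simp
    · exact absurd h hlc'
    · rw [hmap]
      unfold Polynomial.leadingCoeff
      rw [h]
      simp
  -- partition of the roots
  set q : ℂ → Prop := fun ξ => Complex.abs ξ ≤ R ∧ ξ ≠ 0 with hq
  have hpart : Pc.roots.filter q + Pc.roots.filter (fun a => ¬ q a) = Pc.roots :=
    Multiset.filter_add_not _ _
  set TA := Pc.roots.filter q with hTA
  set TB := Pc.roots.filter (fun a => ¬ q a) with hTB
  have hprodsplit : (Pc.roots.map (fun a => Complex.abs ((l:ℂ) - a))).prod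
      = (TA.map (fun a => Complex.abs ((l:ℂ) - a))).prod
        * (TB.map (fun a => Complex.abs ((l:ℂ) - a))).prod := by
    conv_lhs => rw [← hpart]
    rw [Multiset.map_add, Multiset.prod_add]
  -- bound for the near part
  have hcardA : Multiset.card TA ≤ m := by
    apply hcount P hP hcoeff TA (Multiset.filter_le _ _)
    intro ξ hξ
    exact (Multiset.mem_filter.mp hξ).2
  have hexp1 : Real.exp (-A * d) ≤ 1 := by
    apply Real.exp_le_one_iff.mpr
    have hd0 : (0:ℝ) ≤ (d:ℝ) := Nat.cast_nonneg d
    nlinarith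
  have hrootA : ∀ a ∈ TA, Polynomial.aeval (a : ℂ) P = 0 := by
    intro a ha
    have hmem : a ∈ Pc.roots := Multiset.mem_of_le (Multiset.filter_le _ _) ha
    have hisr := (Polynomial.mem_roots hPc).mp hmem
    rw [Polynomial.aeval_def, Polynomial.eval₂_eq_eval_map, algebraMap_int_eq, ← hPcdef]
    exact hisr
  have hprodA : Real.exp (-A * d) ^ m
      ≤ (TA.map (fun a => Complex.abs ((l:ℂ) - a))).prod := by
    have h1 : Real.exp (-A * d) ^ Multiset.card (TA.map (fun a => Complex.abs ((l:ℂ) - a)))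
        ≤ (TA.map (fun a => Complex.abs ((l:ℂ) - a))).prod := by
      apply ms_pow_card_le_prod _ _ (Real.exp_nonneg _)
      intro x hx
      obtain ⟨a, ha, rfl⟩ := Multiset.mem_map.mp hx
      exact le_of_lt (hroot P hP hdeg hcoeff a (hrootA a ha))
    rw [Multiset.card_map] at h1
    exact le_trans (pow_le_pow_of_le_one (Real.exp_nonneg _) hexp1 hcardA) h1
  -- bound for the far part
  have hcardB : Multiset.card TB ≤ d := by
    have h1 : Multiset.card TB ≤ Multiset.card Pc.roots :=
      Multiset.card_le_card (Multiset.filter_le _ _)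
    have h2 : Multiset.card Pc.roots ≤ Pc.natDegree := Polynomial.card_roots' Pc
    have h3 : Pc.natDegree ≤ P.natDegree := Polynomial.natDegree_map_le
    omega
  have hprodB : c ^ d ≤ (TB.map (fun a => Complex.abs ((l:ℂ) - a))).prod := by
    have h1 : c ^ Multiset.card (TB.map (fun a => Complex.abs ((l:ℂ) - a)))
        ≤ (TB.map (fun a => Complex.abs ((l:ℂ) - a))).prod := by
      apply ms_pow_card_le_prod _ _ (le_of_lt hc0)
      intro x hx
      obtain ⟨a, ha, rfl⟩ := Multiset.mem_map.mp hx
      have hnq : ¬ q a := (Multiset.mem_filter.mp ha).2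
      by_cases ha0 : a = 0
      · subst ha0
        rw [sub_zero, Complex.abs_ofReal, abs_of_pos hl0]
        rw [hcdef]; linarith
      · have hR : R < Complex.abs a := by
          by_contra hcon
          exact hnq ⟨le_of_not_gt hcon, ha0⟩
        have htri : Complex.abs a ≤ Complex.abs ((l:ℂ) - a) + Complex.abs (l:ℂ) := by
          calc Complex.abs a = Complex.abs ((a - (l:ℂ)) + (l:ℂ)) := by ring_nf
            _ ≤ Complex.abs (a - (l:ℂ)) + Complex.abs (l:ℂ) := Complex.abs.add_le _ _
            _ = Complex.abs ((l:ℂ) - a) + Complex.abs (l:ℂ) := by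
                rw [Complex.abs.map_sub]
        rw [Complex.abs_ofReal, abs_of_pos hl0] at htri
        have : R - l ≤ Complex.abs ((l:ℂ) - a) := by linarith
        have hcRl : c = R - l := by rw [hcdef, hRdef]; ring
        linarith
    rw [Multiset.card_map] at h1
    exact le_trans (pow_le_pow_of_le_one (le_of_lt hc0) (le_of_lt hc1) hcardB) h1
  -- combine everything
  have hfinal : Real.exp (-A * d) ^ m * c ^ d ≤ Complex.abs (Pc.eval (l:ℂ)) := by
    rw [heval, hlead, one_mul, hprodsplit]
    exact mul_le_mul hprodA hprodB (pow_nonneg (le_of_lt hc0) d)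
      (le_trans (pow_nonneg (Real.exp_nonneg _) m) hprodA)
  rw [← haeval]
  have hlB : l ^ (n₀ + 1) < Real.exp (-A * m) * c :=
    lt_of_le_of_lt (pow_le_pow_of_le_one (le_of_lt hl0) (le_of_lt hl2) (Nat.le_succ n₀)) hn₀
  calc l ^ ((n₀ + 1) * d) = (l ^ (n₀ + 1)) ^ d := pow_mul l _ d
    _ < (Real.exp (-A * m) * c) ^ d :=
        pow_lt_pow_left₀ hlB (pow_nonneg (le_of_lt hl0) _) hd.ne'
    _ = Real.exp (-A * d) ^ m * c ^ d := by
        rw [mul_pow, ← Real.exp_nat_mul, ← Real.exp_nat_mul,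
          show (d:ℝ) * (-A * (m:ℝ)) = (m:ℝ) * (-A * (d:ℝ)) by ring]
    _ ≤ Complex.abs (Pc.eval (l:ℂ)) := hfinal
end

section
/- Let μ be a compactly supported probability measure on ℝ whose scale-r entropies satisfy d - H(μ; 2^{-d}) ≤ C for all d ∈ ℤ_{>0} and some constant C, where H(μ; r) = ∫_0^1 H(⌊r^{-1}X + t⌋) dt for X distributed according to μ and H the Shannon entropy (base 2) of a discrete random variable. Then μ is absolutely continuous with respect to Lebesgue measure. -/
open MeasureTheory

set_option maxHeartbeats 1000000

section Aux
open Real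

lemma aux_sum_negMulLog_le {ι : Type*} (S : Finset ι) (p : ι → ℝ) (hp : ∀ i ∈ S, 0 ≤ p i) :
    ∑ i ∈ S, negMulLog (p i) ≤
      negMulLog (∑ i ∈ S, p i) + (∑ i ∈ S, p i) * Real.log S.card := by
  rcases S.eq_empty_or_nonempty with rfl | hS
  · simp
  · have hn : (0:ℝ) < S.card := by exact_mod_cast Finset.card_pos.2 hS
    have h1 : ∑ i ∈ S, ((S.card : ℝ)⁻¹) • negMulLog (p i) ≤
        negMulLog (∑ i ∈ S, ((S.card : ℝ)⁻¹) • p i) := by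
      refine concaveOn_negMulLog.le_map_sum (fun i _ => by positivity) ?_
        (fun i hi => hp i hi)
      simp [Finset.sum_const, nsmul_eq_mul]
      field_simp
    set a := ∑ i ∈ S, p i with ha
    have h2 : ∑ i ∈ S, ((S.card : ℝ)⁻¹) • p i = a * (S.card : ℝ)⁻¹ := by
      rw [← Finset.smul_sum, smul_eq_mul]; ring
    have h3 : ∑ i ∈ S, ((S.card : ℝ)⁻¹) • negMulLog (p i)
        = (S.card : ℝ)⁻¹ * ∑ i ∈ S, negMulLog (p i) := by
      rw [← Finset.smul_sum]; rfl
    rw [h2, h3] at h1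
    have h4 : negMulLog (a * (S.card : ℝ)⁻¹)
        = (S.card : ℝ)⁻¹ * negMulLog a + a * ((S.card : ℝ)⁻¹ * Real.log S.card) := by
      rw [negMulLog_mul]
      congr 1
      rw [negMulLog, Real.log_inv]; ring
    rw [h4] at h1
    calc ∑ i ∈ S, negMulLog (p i)
        = (S.card : ℝ) * ((S.card : ℝ)⁻¹ * ∑ i ∈ S, negMulLog (p i)) := by
          field_simp
      _ ≤ (S.card : ℝ) * ((S.card : ℝ)⁻¹ * negMulLog a + a * ((S.card : ℝ)⁻¹ * Real.log S.card)) := by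
          exact mul_le_mul_of_nonneg_left h1 hn.le
      _ = negMulLog a + a * Real.log S.card := by field_simp

lemma aux_binary {a b : ℝ} (hab : a + b = 1) :
    negMulLog a + negMulLog b ≤ Real.log 2 := by
  have hb : b = 1 - a := by linarith
  subst hb
  rw [← binEntropy_eq_negMulLog_add_negMulLog_one_sub]
  exact binEntropy_le_log_two

lemma cell_eq (N t : ℝ) (hN : 0 < N) (k : ℤ) :
    {x : ℝ | ⌊N * x + t⌋ = k} = Set.Ico (((k:ℝ) - t)/N) (((k:ℝ) + 1 - t)/N) := by
  ext x
  simp only [Set.mem_setOf_eq, Set.mem_Ico, Int.floor_eq_iff]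
  constructor
  · rintro ⟨h1, h2⟩
    push_cast at h2
    constructor
    · rw [div_le_iff₀ hN]; nlinarith
    · rw [lt_div_iff₀ hN]; nlinarith
  · rintro ⟨h1, h2⟩
    rw [div_le_iff₀ hN] at h1
    rw [lt_div_iff₀ hN] at h2
    constructor
    · nlinarith
    · push_cast; nlinarith

lemma key_bound (μ : Measure ℝ) [IsProbabilityMeasure μ] (K : Set ℝ) (hsupp : μ Kᶜ = 0)
    (M : ℝ) (hM : 1 ≤ M) (hKM : K ⊆ Set.Icc (-M) M)
    (U : Set ℝ) (ε : ℝ) (hε0 : 0 < ε) (hε1 : ε ≤ 1)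
    (hvol : volume U ≤ ENNReal.ofReal ε)
    (d : ℕ) (t : ℝ) (ht0 : 0 ≤ t) (ht1 : t ≤ 1) :
    ∑' k : ℤ, -((μ {x | ⌊(2:ℝ)^d * x + t⌋ = k}).toReal
        * Real.logb 2 (μ {x | ⌊(2:ℝ)^d * x + t⌋ = k}).toReal)
      ≤ (d:ℝ) + (μ {x | 2/(2:ℝ)^d < Metric.infDist x Uᶜ}).toReal * Real.logb 2 ε
        + Real.logb 2 (2*M+3) + 1 := by
  classical
  set N : ℝ := (2:ℝ)^d with hNdef
  have hN : 0 < N := by positivity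
  have hN1 : 1 ≤ N := one_le_pow₀ (by norm_num)
  have hM0 : 0 < M := lt_of_lt_of_le one_pos hM
  set c : ℤ → Set ℝ := fun k => {x | ⌊N * x + t⌋ = k} with hcdef
  have hc : ∀ k, c k = Set.Ico (((k:ℝ) - t)/N) (((k:ℝ) + 1 - t)/N) := fun k => cell_eq N t hN k
  have hcm : ∀ k, MeasurableSet (c k) := fun k => (hc k) ▸ measurableSet_Ico
  have hdisj : ∀ k₁ k₂ : ℤ, k₁ ≠ k₂ → Disjoint (c k₁) (c k₂) := by
    intro k₁ k₂ hne
    rw [Set.disjoint_left]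
    intro x h1 h2
    exact hne (h1.symm.trans h2)
  set F : Finset ℤ := Finset.Icc ⌊-(M*N)⌋ (⌊M*N⌋ + 1) with hFdef
  have hmemF : ∀ x ∈ K, ⌊N*x + t⌋ ∈ F := by
    intro x hx
    obtain ⟨hx1, hx2⟩ := hKM hx
    rw [Finset.mem_Icc]
    constructor
    · exact Int.floor_le_floor (by nlinarith)
    · have : ⌊N*x + t⌋ ≤ ⌊M*N + 1⌋ := Int.floor_le_floor (by nlinarith)
      rwa [show M*N + 1 = M*N + (1:ℤ) by norm_num, Int.floor_add_intCast] at this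
  have hzero : ∀ k ∉ F, μ (c k) = 0 := by
    intro k hk
    refine measure_mono_null ?_ hsupp
    intro x hx hxK
    exact hk (hx ▸ hmemF x hxK)
  set p : ℤ → ℝ := fun k => (μ (c k)).toReal with hpdef
  have hp0 : ∀ k, 0 ≤ p k := fun k => ENNReal.toReal_nonneg
  -- sum over F is 1
  have hUnion : μ (⋃ k ∈ F, c k) = 1 := by
    have hcompl : (⋃ k ∈ F, c k)ᶜ ⊆ Kᶜ := by
      intro x hx hxK
      exact hx (Set.mem_biUnion (hmemF x hxK) rfl)
    have : μ ((⋃ k ∈ F, c k)ᶜ) = 0 := measure_mono_null hcompl hsupp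
    rwa [prob_compl_eq_zero_iff (F.measurableSet_biUnion (fun k _ => hcm k))] at this
  have hadd : ∀ (G : Finset ℤ), μ (⋃ k ∈ G, c k) = ∑ k ∈ G, μ (c k) := by
    intro G
    exact measure_biUnion_finset (fun k₁ h₁ k₂ h₂ hne => hdisj k₁ k₂ hne) (fun k _ => hcm k)
  have hsum1 : ∑ k ∈ F, p k = 1 := by
    have := (hadd F).symm.trans hUnion
    have h2 : (∑ k ∈ F, μ (c k)).toReal = ∑ k ∈ F, p k :=
      ENNReal.toReal_sum (fun k _ => measure_ne_top μ _)
    rw [← h2, this]; simp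
  -- reduce tsum to finite sum of negMulLog / log 2
  have hterm : ∀ k, -(p k * Real.logb 2 (p k)) = negMulLog (p k) / Real.log 2 := by
    intro k
    rw [Real.logb, negMulLog]
    ring
  have htsum : (∑' k : ℤ, -(p k * Real.logb 2 (p k)))
      = (∑ k ∈ F, negMulLog (p k)) / Real.log 2 := by
    rw [tsum_eq_sum (s := F) (fun k hk => by
      simp [hpdef, hzero k hk])]
    rw [Finset.sum_div]
    exact Finset.sum_congr rfl (fun k _ => hterm k)
  set S : Finset ℤ := F.filter (fun k => c k ⊆ U) with hSdef
  set T : Finset ℤ := F.filter (fun k => ¬ (c k ⊆ U)) with hTdef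
  set a : ℝ := ∑ k ∈ S, p k with hadef
  set b : ℝ := ∑ k ∈ T, p k with hbdef
  have ha0 : 0 ≤ a := Finset.sum_nonneg (fun k _ => hp0 k)
  have hb0 : 0 ≤ b := Finset.sum_nonneg (fun k _ => hp0 k)
  have hab : a + b = 1 := by
    rw [hadef, hbdef, Finset.sum_filter_add_sum_filter_not]
    exact hsum1
  -- volume of each cell
  have hvolc : ∀ k, volume (c k) = ENNReal.ofReal (1/N) := by
    intro k
    rw [hc k, Real.volume_Ico]
    congr 1
    field_simp
    ring
  -- card S bound
  have hScard : (S.card : ℝ) ≤ ε * N := by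
    have hsub : (⋃ k ∈ S, c k) ⊆ U := by
      intro x hx
      obtain ⟨k, hk, hxk⟩ := Set.mem_iUnion₂.mp hx
      exact (Finset.mem_filter.mp hk).2 hxk
    have h2 : (S.card : ENNReal) * ENNReal.ofReal (1/N) ≤ ENNReal.ofReal ε := by
      calc (S.card : ENNReal) * ENNReal.ofReal (1/N)
          = ∑ k ∈ S, volume (c k) := by
            rw [Finset.sum_congr rfl (fun k _ => hvolc k)]; simp [mul_comm]
        _ = volume (⋃ k ∈ S, c k) :=
            (measure_biUnion_finset (fun k₁ h₁ k₂ h₂ hne => hdisj k₁ k₂ hne)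
              (fun k _ => hcm k)).symm
        _ ≤ volume U := measure_mono hsub
        _ ≤ ENNReal.ofReal ε := hvol
    have h3 : ENNReal.ofReal ((S.card : ℝ) * (1/N)) ≤ ENNReal.ofReal ε := by
      rwa [ENNReal.ofReal_mul (Nat.cast_nonneg _), ENNReal.ofReal_natCast]
    have h4 : (S.card : ℝ) * (1/N) ≤ ε :=
      (ENNReal.ofReal_le_ofReal_iff hε0.le).mp h3
    calc (S.card : ℝ) = ((S.card : ℝ) * (1/N)) * N := by field_simp
      _ ≤ ε * N := mul_le_mul_of_nonneg_right h4 hN.le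
  -- card F bound
  have hFcard : (F.card : ℝ) ≤ (2*M+3) * N := by
    have hle : ⌊-(M*N)⌋ ≤ ⌊M*N⌋ + 1 := by
      have h0 : (-(M*N)) ≤ M*N := by nlinarith
      have := Int.floor_le_floor h0
      omega
    have h1 : (F.card : ℤ) = ⌊M*N⌋ + 1 + 1 - ⌊-(M*N)⌋ := by
      rw [hFdef, Int.card_Icc]
      exact Int.toNat_of_nonneg (by omega)
    have h1' : (F.card : ℝ) = ((⌊M*N⌋:ℝ) + 1 + 1 - (⌊-(M*N)⌋:ℝ)) := by
      exact_mod_cast congrArg (Int.cast : ℤ → ℝ) h1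
    have h4 : (⌊M*N⌋ : ℝ) ≤ M*N := Int.floor_le _
    have h5 : -(M*N) - 1 < (⌊-(M*N)⌋ : ℝ) := by linarith [Int.lt_floor_add_one (-(M*N))]
    rw [h1']
    nlinarith
  -- W bound : m ≤ a
  set W : Set ℝ := {x | 2/N < Metric.infDist x Uᶜ} with hWdef
  set m : ℝ := (μ W).toReal with hmdef
  have hWsub : W ∩ K ⊆ ⋃ k ∈ S, c k := by
    rintro x ⟨hxW, hxK⟩
    have hkF : ⌊N*x + t⌋ ∈ F := hmemF x hxK
    have hcell : x ∈ c ⌊N*x + t⌋ := rfl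
    have hxW' : 2/N < Metric.infDist x Uᶜ := hxW
    have hcU : c ⌊N*x + t⌋ ⊆ U := by
      intro y hy
      by_contra hyU
      have hd1 : Metric.infDist x Uᶜ ≤ dist x y := Metric.infDist_le_dist_of_mem hyU
      rw [hc _] at hy hcell
      obtain ⟨hy1, hy2⟩ := hy
      obtain ⟨hx1, hx2⟩ := hcell
      have hBA : ((⌊N*x+t⌋:ℝ) + 1 - t)/N - ((⌊N*x+t⌋:ℝ) - t)/N = 1/N := by
        field_simp
        ring
      have h1N : (1:ℝ)/N < 2/N := by
        have h2 : (2:ℝ)/N = 1/N + 1/N := by ring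
        have h3 : (0:ℝ) < 1/N := by positivity
        linarith
      have hdxy : dist x y < 1/N := by
        rw [Real.dist_eq, abs_lt]
        constructor <;> nlinarith
      linarith
    exact Set.mem_biUnion (Finset.mem_filter.mpr ⟨hkF, hcU⟩) hcell
  have hma : m ≤ a := by
    have h1 : μ W ≤ μ (W ∩ K) := by
      have : μ (W \ K) = 0 := measure_mono_null (fun x hx => hx.2) hsupp
      calc μ W ≤ μ (W ∩ K) + μ (W \ K) := measure_le_inter_add_diff μ W K
        _ = μ (W ∩ K) := by rw [this, add_zero]
    have h2 : μ (W ∩ K) ≤ μ (⋃ k ∈ S, c k) := measure_mono hWsub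
    have h3 : μ (⋃ k ∈ S, c k) = ∑ k ∈ S, μ (c k) := hadd S
    have h4 : (∑ k ∈ S, μ (c k)).toReal = a :=
      ENNReal.toReal_sum (fun k _ => measure_ne_top μ _)
    calc m ≤ (μ (⋃ k ∈ S, c k)).toReal :=
          ENNReal.toReal_mono (measure_ne_top μ _) (h1.trans h2)
      _ = a := by rw [h3, h4]
  -- Jensen on S
  have hJS : ∑ k ∈ S, negMulLog (p k) ≤ negMulLog a + a * Real.log (ε * N) := by
    refine le_trans (aux_sum_negMulLog_le S p (fun k _ => hp0 k)) ?_
    rw [← hadef]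
    gcongr negMulLog a + ?_
    rcases Nat.eq_zero_or_pos S.card with hced | hced
    · have hSe : S = ∅ := Finset.card_eq_zero.mp hced
      simp [hadef, hSe]
    · have hc1 : (1:ℝ) ≤ S.card := by exact_mod_cast hced
      have hlog : Real.log S.card ≤ Real.log (ε * N) :=
        Real.log_le_log (by positivity) hScard
      exact mul_le_mul_of_nonneg_left hlog ha0
  -- Jensen on T
  have hJT : ∑ k ∈ T, negMulLog (p k) ≤ negMulLog b + b * Real.log ((2*M+3) * N) := by
    refine le_trans (aux_sum_negMulLog_le T p (fun k _ => hp0 k)) ?_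
    rw [← hbdef]
    gcongr negMulLog b + ?_
    rcases Nat.eq_zero_or_pos T.card with hced | hced
    · have hTe : T = ∅ := Finset.card_eq_zero.mp hced
      simp [hbdef, hTe]
    · have hc1 : (1:ℝ) ≤ T.card := by exact_mod_cast hced
      have hTF : (T.card : ℝ) ≤ F.card := by
        exact_mod_cast Finset.card_le_card (Finset.filter_subset _ F)
      have hlog : Real.log T.card ≤ Real.log ((2*M+3) * N) :=
        Real.log_le_log (by positivity) (hTF.trans hFcard)
      exact mul_le_mul_of_nonneg_left hlog hb0
  -- combine
  have hsplit : ∑ k ∈ F, negMulLog (p k)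
      = ∑ k ∈ S, negMulLog (p k) + ∑ k ∈ T, negMulLog (p k) := by
    rw [hSdef, hTdef, Finset.sum_filter_add_sum_filter_not]
  have hb1 : b ≤ 1 := by linarith
  have hlogε : Real.log ε ≤ 0 := Real.log_nonpos hε0.le hε1
  have hlogM : 0 ≤ Real.log (2*M+3) := Real.log_nonneg (by linarith)
  have hmain : ∑ k ∈ F, negMulLog (p k)
      ≤ Real.log 2 + Real.log N + m * Real.log ε + Real.log (2*M+3) := by
    rw [hsplit]
    have h1 := aux_binary hab
    have h2 : a * Real.log (ε * N) = a * Real.log ε + a * Real.log N := by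
      rw [Real.log_mul (ne_of_gt hε0) (ne_of_gt hN)]; ring
    have h3 : b * Real.log ((2*M+3) * N) = b * Real.log (2*M+3) + b * Real.log N := by
      rw [Real.log_mul (by linarith) (ne_of_gt hN)]; ring
    have h4 : a * Real.log ε ≤ m * Real.log ε :=
      mul_le_mul_of_nonpos_right hma hlogε
    have h5 : b * Real.log (2*M+3) ≤ Real.log (2*M+3) := by
      nlinarith
    have h6 : a * Real.log N + b * Real.log N = Real.log N := by
      rw [← add_mul, hab, one_mul]
    nlinarith [hJS, hJT]
  -- finish: divide by log 2
  have hlog2 : (0:ℝ) < Real.log 2 := Real.log_pos (by norm_num)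
  have hfin : (∑ k ∈ F, negMulLog (p k)) / Real.log 2
      ≤ (d:ℝ) + m * Real.logb 2 ε + Real.logb 2 (2*M+3) + 1 := by
    rw [div_le_iff₀ hlog2]
    have hNlog : Real.log N = d * Real.log 2 := by
      rw [hNdef, Real.log_pow]
    have hlb1 : Real.logb 2 ε * Real.log 2 = Real.log ε := by
      rw [Real.logb]; field_simp
    have hlb2 : Real.logb 2 (2*M+3) * Real.log 2 = Real.log (2*M+3) := by
      rw [Real.logb]; field_simp
    calc ∑ k ∈ F, negMulLog (p k)
        ≤ Real.log 2 + Real.log N + m * Real.log ε + Real.log (2*M+3) := hmain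
      _ = ((d:ℝ) + m * Real.logb 2 ε + Real.logb 2 (2*M+3) + 1) * Real.log 2 := by
          rw [hNlog, ← hlb1, ← hlb2]; ring
  exact le_trans (le_of_eq htsum) hfin

end Aux

/-- The averaged scale-`r` entropy `H(μ; r)` (in bits): partition `ℝ` into intervals of
length `r` with a uniformly random offset `t ∈ [0,1)`, take the Shannon entropy of `μ`
with respect to this partition, and average over `t`. -/
noncomputable def scaleEnt (μ : Measure ℝ) (r : ℝ) : ℝ :=
  ∫ t in (0 : ℝ)..1,
    ∑' k : ℤ, -((μ {x | ⌊r⁻¹ * x + t⌋ = k}).toReal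
        * Real.logb 2 (μ {x | ⌊r⁻¹ * x + t⌋ = k}).toReal)

theorem stmt19 (μ : Measure ℝ) [IsProbabilityMeasure μ]
    (K : Set ℝ) (hK : IsCompact K) (hsupp : μ Kᶜ = 0)
    (C : ℝ) (h : ∀ d : ℕ, 0 < d → (d : ℝ) - scaleEnt μ (((2 : ℝ) ^ d)⁻¹) ≤ C) :
    μ ≪ (volume : Measure ℝ) := by
  refine Measure.AbsolutelyContinuous.mk (fun s hsm hs0 => ?_)
  by_contra hne
  have hηpos : 0 < (μ s).toReal :=
    ENNReal.toReal_pos hne (measure_ne_top μ s)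
  set η := (μ s).toReal with hηdef
  -- bound the support
  obtain ⟨r, hr⟩ := hK.isBounded.subset_closedBall 0
  set M : ℝ := max r 1 with hMdef
  have hM : 1 ≤ M := le_max_right _ _
  have hKM : K ⊆ Set.Icc (-M) M := by
    refine hr.trans ?_
    rw [Real.closedBall_eq_Icc]
    have hrM : r ≤ M := le_max_left r 1
    exact Set.Icc_subset_Icc (by linarith) (by linarith)
  set c0 : ℝ := Real.logb 2 (2*M+3) + 1 with hc0def
  -- choose n
  obtain ⟨n₀, hn₀⟩ := exists_nat_gt ((C + c0)/η)
  set n : ℕ := max n₀ 1 with hndef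
  have hn1 : 1 ≤ n := le_max_right _ _
  have hnpos : (0:ℝ) < n := by exact_mod_cast Nat.lt_of_lt_of_le Nat.zero_lt_one hn1
  have hngt : (C + c0)/η < n := lt_of_lt_of_le hn₀ (by exact_mod_cast le_max_left n₀ 1)
  have hCn : C + c0 < n * η := by
    rw [div_lt_iff₀ hηpos] at hngt; linarith
  set ε : ℝ := ((2:ℝ)⁻¹)^n with hεdef
  have hε0 : 0 < ε := by positivity
  have hε1 : ε ≤ 1 := by
    apply pow_le_one₀ <;> norm_num
  have hlogbε : Real.logb 2 ε = -(n:ℝ) := by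
    rw [hεdef, inv_pow, Real.logb_inv, Real.logb_pow, Real.logb_self_eq_one (by norm_num)]
    ring
  -- open superset of s with small volume
  have hvlt : volume s < ENNReal.ofReal ε := by
    rw [hs0]; exact ENNReal.ofReal_pos.mpr hε0
  obtain ⟨U, hsU, hUopen, hUvol⟩ := Set.exists_isOpen_lt_of_lt s _ hvlt
  have hUvol' : volume U ≤ ENNReal.ofReal ε := hUvol.le
  have hUc_ne : Uᶜ.Nonempty := by
    rw [Set.nonempty_compl]
    rintro rfl
    rw [Real.volume_univ] at hUvol
    exact (hUvol.trans_le le_top).false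
  -- the approximating sets
  set W : ℕ → Set ℝ := fun d => {x | 2/(2:ℝ)^d < Metric.infDist x Uᶜ} with hWdef
  have hWmono : Monotone W := by
    intro d d' hdd' x hx
    have h1 : (2:ℝ)^d ≤ 2^d' := pow_le_pow_right₀ (by norm_num) hdd'
    have h2 : (2:ℝ)/2^d' ≤ 2/2^d := by
      gcongr
    exact lt_of_le_of_lt h2 hx
  have hWU : ∀ d, W d ⊆ U := by
    intro d x hx
    by_contra hxU
    have : Metric.infDist x Uᶜ = 0 := Metric.infDist_zero_of_mem hxU
    have hx' : 2/(2:ℝ)^d < Metric.infDist x Uᶜ := hx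
    rw [this] at hx'
    have : (0:ℝ) < 2/(2:ℝ)^d := by positivity
    linarith
  have hUW : U ⊆ ⋃ d, W d := by
    intro x hx
    have hpos : 0 < Metric.infDist x Uᶜ :=
      (hUopen.isClosed_compl.notMem_iff_infDist_pos hUc_ne).mp (by simpa using hx)
    obtain ⟨d, hd⟩ := pow_unbounded_of_one_lt (2/Metric.infDist x Uᶜ) (by norm_num : (1:ℝ) < 2)
    refine Set.mem_iUnion.mpr ⟨d, ?_⟩
    have h2d : (0:ℝ) < 2^d := by positivity
    show 2/(2:ℝ)^d < Metric.infDist x Uᶜ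
    rw [div_lt_iff₀ h2d]
    rw [div_lt_iff₀ hpos] at hd
    linarith
  -- quantitative bound at large scales
  have hclaim : ∀ d : ℕ, 0 < d → C < d → (μ (W d)).toReal * n ≤ C + c0 := by
    intro d hd0 hdC
    set g : ℝ → ℝ := fun t => ∑' k : ℤ, -((μ {x | ⌊(2:ℝ)^d * x + t⌋ = k}).toReal
        * Real.logb 2 (μ {x | ⌊(2:ℝ)^d * x + t⌋ = k}).toReal) with hgdef
    have hEq : scaleEnt μ (((2:ℝ)^d)⁻¹) = ∫ t in (0:ℝ)..1, g t := by
      simp only [scaleEnt, inv_inv, hgdef]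
    set m : ℝ := (μ (W d)).toReal with hmdef
    set B : ℝ := (d:ℝ) + m * Real.logb 2 ε + Real.logb 2 (2*M+3) + 1 with hBdef
    have hptw : ∀ t ∈ Set.Icc (0:ℝ) 1, g t ≤ B :=
      fun t ht => key_bound μ K hsupp M hM hKM U ε hε0 hε1 hUvol' d t ht.1 ht.2
    by_cases hI : IntervalIntegrable g volume 0 1
    · have hle : ∫ t in (0:ℝ)..1, g t ≤ ∫ t in (0:ℝ)..1, B :=
        intervalIntegral.integral_mono_on zero_le_one hI intervalIntegrable_const hptw
      have hBint : ∫ t in (0:ℝ)..1, (B:ℝ) = B := by simp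
      have hhd := h d hd0
      rw [hEq] at hhd
      have hdB : (d:ℝ) - B ≤ C := by
        rw [← hBint]; linarith
      rw [hBdef, hlogbε] at hdB
      rw [hc0def]
      nlinarith [hdB]
    · exfalso
      have h0 : scaleEnt μ (((2:ℝ)^d)⁻¹) = 0 := by
        rw [hEq]; exact intervalIntegral.integral_undef hI
      have := h d hd0
      rw [h0] at this
      linarith
  -- bound every W d
  have hWd_le : ∀ d : ℕ, μ (W d) ≤ ENNReal.ofReal ((C + c0)/n) := by
    intro d
    set d' : ℕ := max d (max 1 (⌈C⌉₊ + 1)) with hd'def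
    have hd'0 : 0 < d' := by
      have : (1:ℕ) ≤ max 1 (⌈C⌉₊ + 1) := le_max_left _ _
      omega
    have hd'C : C < d' := by
      have h1 : C ≤ (⌈C⌉₊ : ℝ) := Nat.le_ceil C
      have h2 : (⌈C⌉₊ + 1 : ℕ) ≤ d' := le_trans (le_max_right _ _) (le_max_right _ _)
      have h3 : ((⌈C⌉₊ + 1 : ℕ) : ℝ) ≤ (d' : ℝ) := by exact_mod_cast h2
      push_cast at h3
      linarith
    have hq := hclaim d' hd'0 hd'C
    have hm' : (μ (W d')).toReal ≤ (C + c0)/n := by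
      rw [le_div_iff₀ hnpos]
      exact hq
    calc μ (W d) ≤ μ (W d') := measure_mono (hWmono (le_max_left _ _))
      _ = ENNReal.ofReal ((μ (W d')).toReal) :=
          (ENNReal.ofReal_toReal (measure_ne_top μ _)).symm
      _ ≤ ENNReal.ofReal ((C + c0)/n) := ENNReal.ofReal_le_ofReal hm'
  -- conclude
  have hUle : μ U ≤ ENNReal.ofReal ((C + c0)/n) := by
    have htend := tendsto_measure_iUnion_atTop (μ := μ) hWmono
    exact (measure_mono hUW).trans (le_of_tendsto' htend hWd_le)
  have hfin : μ s ≤ ENNReal.ofReal ((C + c0)/n) := (measure_mono hsU).trans hUle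
  have hlt : ENNReal.ofReal ((C + c0)/n) < ENNReal.ofReal η := by
    rw [ENNReal.ofReal_lt_ofReal_iff hηpos, div_lt_iff₀ hnpos]
    linarith
  have hcontra : μ s < μ s :=
    lt_of_le_of_lt hfin (hlt.trans_eq (ENNReal.ofReal_toReal (measure_ne_top μ s)))
  exact absurd hcontra (lt_irrefl _)
end
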